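/- Fix positive integers p, q, r with 1/p + 1/q + 1/r > 1, and let I, J be sets of nonnegative real numbers satisfying the descending chain condition with 0 ∉ J. Then the set LCT_{1,(p,q,r)}(I,J) := {(qr + pr + pq − pqr − i)/j | i ∈ I^+_{(p,q,r)}, j ∈ J^+_{(p,q,r)}, j > 0, and the value is ≥ 0} satisfies the ascending chain condition. -/

import Mathlib

/-- A set of reals satisfies the descending chain condition if it contains
no infinite strictly decreasing sequence. -/
def DCC (S : Set ℝ) : Prop := ¬ ∃ f : ℕ → ℝ, (∀ n, f n ∈ S) ∧ StrictAnti f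

/-- A set of reals satisfies the ascending chain condition if it contains
no infinite strictly increasing sequence. -/
def ACC (S : Set ℝ) : Prop := ¬ ∃ f : ℕ → ℝ, (∀ n, f n ∈ S) ∧ StrictMono f

/-- `I⁺ = {0} ∪ {x ∈ [0,1] | x is a finite (nonempty) sum of elements of I}`. -/
def plusSet (I : Set ℝ) : Set ℝ :=
  {0} ∪ {x | 0 ≤ x ∧ x ≤ 1 ∧ ∃ l : List ℝ, l ≠ [] ∧ (∀ j ∈ l, j ∈ I) ∧ l.sum = x}

/-- `D(I) = {a ≤ 1 | a = (m - 1 + f)/m, m ∈ ℤ_{>0}, f ∈ I⁺}`. -/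
def DSet (I : Set ℝ) : Set ℝ :=
  {a | a ≤ 1 ∧ ∃ m : ℕ, 0 < m ∧ ∃ f ∈ plusSet I, a = ((m : ℝ) - 1 + f) / m}

/-- `D_d(I) = {a ≤ 1 | a = (m - 1 + f + k·d)/m, k, m ∈ ℤ_{>0}, f ∈ I⁺}`. -/
def DdSet (d : ℝ) (I : Set ℝ) : Set ℝ :=
  {a | a ≤ 1 ∧ ∃ k m : ℕ, 0 < k ∧ 0 < m ∧ ∃ f ∈ plusSet I,
    a = ((m : ℝ) - 1 + f + (k : ℝ) * d) / m}

/-- `S⁺_{(p,q,r)} = {qr·s₁ + pr·s₂ + pq·s₃ | s₁, s₂, s₃ ∈ S⁺}`. -/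
def plusSetPQR (p q r : ℕ) (S : Set ℝ) : Set ℝ :=
  {x | ∃ s₁ ∈ plusSet S, ∃ s₂ ∈ plusSet S, ∃ s₃ ∈ plusSet S,
    x = (q : ℝ) * r * s₁ + (p : ℝ) * r * s₂ + (p : ℝ) * q * s₃}


/-!
Both `I⁺_{(p,q,r)}` and `J⁺_{(p,q,r)}` lie in the additive monoids generated by `I` and `J`,
which are partially well-ordered because `I` and `J` are nonnegative and satisfy DCC.
Given a strictly increasing sequence `tₙ = (C - iₙ)/jₙ` of such values, pass to a subsequence
along which `iₙ` is monotone; then `jₙ = (C - iₙ)/tₙ` is strictly decreasing, contradicting DCC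
for the monoid generated by `J`.
-/

lemma DCC.isWF {S : Set ℝ} (h : DCC S) : S.IsWF :=
  Set.isWF_iff_no_descending_seq.mpr fun f hf hmem => h ⟨f, hmem, hf⟩

lemma ACC.mono {S T : Set ℝ} (hT : ACC T) (hST : S ⊆ T) : ACC S :=
  fun ⟨f, hmem, hf⟩ => hT ⟨f, fun n => hST (hmem n), hf⟩

lemma plusSet_subset_closure (S : Set ℝ) :
    plusSet S ⊆ (AddSubmonoid.closure S : Set ℝ) := by
  rintro x (rfl | ⟨-, -, l, -, hl, rfl⟩)
  · exact (AddSubmonoid.closure S).zero_mem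
  · exact AddSubmonoid.list_sum_mem _ fun y hy => AddSubmonoid.subset_closure (hl y hy)

lemma plusSetPQR_subset_closure (p q r : ℕ) (S : Set ℝ) :
    plusSetPQR p q r S ⊆ (AddSubmonoid.closure S : Set ℝ) := by
  have nat_mul_mem : ∀ (a b : ℕ) {s : ℝ}, s ∈ plusSet S →
      (a : ℝ) * b * s ∈ AddSubmonoid.closure S := fun a b s hs => by
    simpa [nsmul_eq_mul, mul_assoc] using
      AddSubmonoid.nsmul_mem _ (plusSet_subset_closure S hs) (a * b)
  rintro x ⟨s₁, h₁, s₂, h₂, s₃, h₃, rfl⟩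
  exact add_mem (add_mem (nat_mul_mem q r h₁) (nat_mul_mem p r h₂)) (nat_mul_mem p q h₃)

lemma isPWO_closure_of_DCC {S : Set ℝ} (hS : ∀ x ∈ S, 0 ≤ x) (h : DCC S) :
    (AddSubmonoid.closure S : Set ℝ).IsPWO :=
  h.isWF.isPWO.addSubmonoid_closure hS

lemma denom_lt_of_lt_of_le {C a a' b b' t t' : ℝ} (ht : 0 < t) (htt' : t < t') (haa' : a ≤ a')
    (hb : 0 < b) (hb' : 0 < b') (h : t = (C - a) / b) (h' : t' = (C - a') / b') : b' < b := by
  rw [eq_div_iff hb.ne'] at h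
  rw [eq_div_iff hb'.ne'] at h'
  have : t' * b' < t' * b := by nlinarith
  exact lt_of_mul_lt_mul_left this (ht.trans htt').le

theorem ACC_sub_div {A B : Set ℝ} (hA : A.IsPWO) (hB : B.IsWF) (C : ℝ) :
    ACC {t : ℝ | 0 ≤ t ∧ ∃ a ∈ A, ∃ b ∈ B, 0 < b ∧ t = (C - a) / b} := by
  rintro ⟨f, hmem, hf⟩
  choose a ha b hb hbpos hab using fun n => (hmem (n + 1)).2
  obtain ⟨g, hg⟩ := hA.exists_monotone_subseq (f := a) ha
  have hpos : ∀ n, 0 < f (n + 1) := fun n => (hmem 0).1.trans_lt (hf n.succ_pos)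
  refine Set.isWF_iff_no_descending_seq.mp hB (b ∘ g) (fun m n hmn => ?_) fun n => hb (g n)
  exact denom_lt_of_lt_of_le (hpos (g m)) (hf (by simpa using g.strictMono hmn)) (hg hmn.le)
    (hbpos _) (hbpos _) (hab _) (hab _)

theorem lct_coreg_one_pqr_ACC_general (p q r : ℕ)
    (I J : Set ℝ) (hI : ∀ x ∈ I, 0 ≤ x) (hJ : ∀ x ∈ J, 0 ≤ x)
    (hIdcc : DCC I) (hJdcc : DCC J) :
    ACC {t : ℝ | 0 ≤ t ∧ ∃ i ∈ plusSetPQR p q r I, ∃ j ∈ plusSetPQR p q r J,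
      0 < j ∧ t = ((q : ℝ) * r + (p : ℝ) * r + (p : ℝ) * q
        - (p : ℝ) * q * r - i) / j} := by
  refine (ACC_sub_div (isPWO_closure_of_DCC hI hIdcc) (isPWO_closure_of_DCC hJ hJdcc).isWF
    ((q : ℝ) * r + (p : ℝ) * r + (p : ℝ) * q - (p : ℝ) * q * r)).mono ?_
  rintro t ⟨ht, i, hi, j, hj, hjpos, rfl⟩
  exact ⟨ht, i, plusSetPQR_subset_closure p q r I hi, j, plusSetPQR_subset_closure p q r J hj,
    hjpos, rfl⟩

theorem lct_coreg_one_pqr_ACC (p q r : ℕ) (hp : 0 < p) (hq : 0 < q) (hr : 0 < r)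
    (hpqr : 1 < (1 : ℝ) / p + 1 / q + 1 / r)
    (I J : Set ℝ) (hI : ∀ x ∈ I, 0 ≤ x) (hJ : ∀ x ∈ J, 0 ≤ x)
    (hIdcc : DCC I) (hJdcc : DCC J) (hJ0 : (0:ℝ) ∉ J) :
    ACC {t : ℝ | 0 ≤ t ∧ ∃ i ∈ plusSetPQR p q r I, ∃ j ∈ plusSetPQR p q r J,
      0 < j ∧ t = ((q : ℝ) * r + (p : ℝ) * r + (p : ℝ) * q
        - (p : ℝ) * q * r - i) / j} :=
  lct_coreg_one_pqr_ACC_general p q r I J hI hJ hIdcc hJdcc
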